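/- arXiv:1009.1982 — 5 statements merged into one kernel-verified Lean document; each statement's English description precedes it below -/
import Mathlib

section
/- Let $\varepsilon, \Omega > 0$ with $\sqrt{\pi}\,\varepsilon\,\Omega > 2$, $R_h = \sqrt{1 - 2/(\sqrt{\pi}\varepsilon\Omega)}$, and $\rho^{TF}(r) = \tfrac{\varepsilon^2\Omega^2}{2}\max(r^2 - R_h^2, 0)$. Then the Thomas–Fermi energy $E^{TF} = \int_{B(0,1)} \big(-\Omega^2 r^2 \rho^{TF} + \varepsilon^{-2}(\rho^{TF})^2\big)$ equals $-\Omega^2\big(1 - \tfrac{4}{3\sqrt{\pi}\varepsilon\Omega}\big)$. -/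
/-!
In polar coordinates the energy is `2π ∫₀¹ r g(r) dr`. Since `r² = w + R_h²` wherever
`w = max(r² - R_h², 0)` is nonzero, the integrand is a quadratic polynomial `H` in `w` with
`H 0 = 0`, and the substitutions `u = r²`, `w = u - R_h²` give `π ∫₀^δ H(w) dw` with
`δ = 1 - R_h² = 2/(√π ε Ω)`. As `ε² Ω² δ² = 4/π`, this collapses to `-Ω² (1 - 2δ/3)`.
-/

open MeasureTheory Real Set Metric Module

namespace MeasureTheory

variable {E F : Type*} [NormedAddCommGroup E] [NormedSpace ℝ E] [FiniteDimensional ℝ E]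
  [Nontrivial E] [MeasurableSpace E] [BorelSpace E] [NormedAddCommGroup F] [NormedSpace ℝ F]

theorem setIntegral_closedBall_fun_norm_addHaar (μ : Measure E) [μ.IsAddHaarMeasure]
    (f : ℝ → F) {R : ℝ} (hR : 0 ≤ R) :
    ∫ x in closedBall (0 : E) R, f ‖x‖ ∂μ =
      finrank ℝ E • μ.real (ball 0 1) • ∫ y in 0..R, y ^ (finrank ℝ E - 1) • f y := by
  have hind : (closedBall (0 : E) R).indicator (fun x => f ‖x‖) =
      fun x => (Iic R).indicator f ‖x‖ := by
    ext x
    simp only [indicator, mem_closedBall_zero_iff, mem_Iic]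
  rw [← integral_indicator measurableSet_closedBall, hind, integral_fun_norm_addHaar μ,
    intervalIntegral.integral_of_le hR, ← Ioi_inter_Iic, ← setIntegral_indicator measurableSet_Iic]
  congr 3 with y
  by_cases hy : y ≤ R <;> simp [hy]

end MeasureTheory

theorem EuclideanSpace.setIntegral_closedBall_fin_two_fun_norm {F : Type*} [NormedAddCommGroup F]
    [NormedSpace ℝ F] (f : ℝ → F) {R : ℝ} (hR : 0 ≤ R) :
    ∫ x in closedBall (0 : EuclideanSpace ℝ (Fin 2)) R, f ‖x‖ =
      (2 * π) • ∫ r in 0..R, r • f r := by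
  rw [setIntegral_closedBall_fun_norm_addHaar volume f hR, finrank_euclideanSpace_fin,
    measureReal_def, EuclideanSpace.volume_ball_fin_two]
  simp [pi_pos.le, mul_smul, ofNat_smul_eq_nsmul]

theorem intervalIntegral.integral_mul_comp_sq {g : ℝ → ℝ} (hg : Continuous g) (a b : ℝ) :
    ∫ r in a..b, r * g (r ^ 2) = (1 / 2) * ∫ u in a ^ 2..b ^ 2, g u := by
  rw [← integral_comp_mul_deriv (f := fun r => r ^ 2) (f' := fun r => 2 * r)
    (fun r _ => by simpa using hasDerivAt_pow 2 r) (by fun_prop) hg, ← integral_const_mul]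
  congr 1 with r
  simp only [Function.comp_apply]
  ring

theorem intervalIntegral.integral_comp_max_sub_zero {F : Type*} [NormedAddCommGroup F]
    [NormedSpace ℝ F] {h : ℝ → F} (hh : Continuous h) (h0 : h 0 = 0) {a b c : ℝ}
    (hab : a ≤ b) (hbc : b ≤ c) :
    ∫ u in a..c, h (max (u - b) 0) = ∫ w in 0..c - b, h w := by
  have hcont : Continuous fun u => h (max (u - b) 0) := by fun_prop
  rw [← integral_add_adjacent_intervals (hcont.intervalIntegrable a b)
    (hcont.intervalIntegrable b c)]
  have hleft : ∫ u in a..b, h (max (u - b) 0) = 0 := by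
    rw [integral_congr (g := fun _ => (0 : F)) fun u hu => ?_, integral_zero]
    rw [uIcc_of_le hab] at hu
    simp [max_eq_right (sub_nonpos.mpr hu.2), h0]
  have hright : ∫ u in b..c, h (max (u - b) 0) = ∫ u in b..c, h (u - b) := by
    refine integral_congr fun u hu => ?_
    rw [uIcc_of_le hbc] at hu
    simp [max_eq_left (sub_nonneg.mpr hu.1)]
  rw [hleft, hright, zero_add, integral_comp_sub_right, sub_self]

theorem EuclideanSpace.setIntegral_closedBall_fin_two_comp_max_norm_sq_sub {h : ℝ → ℝ}
    (hh : Continuous h) (h0 : h 0 = 0) {R b : ℝ} (hR : 0 ≤ R) (hb : 0 ≤ b) (hbR : b ≤ R ^ 2) :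
    ∫ x in closedBall (0 : EuclideanSpace ℝ (Fin 2)) R, h (max (‖x‖ ^ 2 - b) 0) =
      π * ∫ w in 0..R ^ 2 - b, h w := by
  simp only [setIntegral_closedBall_fin_two_fun_norm (fun r => h (max (r ^ 2 - b) 0)) hR,
    smul_eq_mul]
  rw [intervalIntegral.integral_mul_comp_sq (g := fun u => h (max (u - b) 0)) (by fun_prop),
    intervalIntegral.integral_comp_max_sub_zero hh h0 (by simpa using hb) hbR]
  ring

/-- The Thomas–Fermi energy of the TF minimizer:
`E^TF = ∫_{B(0,1)} (-Ω² r² ρ^TF + ε⁻² (ρ^TF)²) = -Ω² (1 - 4/(3√π ε Ω))`. -/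
theorem stmt_1 (ε Ω : ℝ) (hε : 0 < ε) (hΩ : 0 < Ω)
    (h : 2 < Real.sqrt π * ε * Ω) :
    let Rh : ℝ := Real.sqrt (1 - 2 / (Real.sqrt π * ε * Ω))
    let ρTF : EuclideanSpace ℝ (Fin 2) → ℝ :=
      fun x => ε ^ 2 * Ω ^ 2 / 2 * max (‖x‖ ^ 2 - Rh ^ 2) 0
    (∫ x in Metric.closedBall (0 : EuclideanSpace ℝ (Fin 2)) 1,
        (-(Ω ^ 2) * ‖x‖ ^ 2 * ρTF x + (ε ^ 2)⁻¹ * ρTF x ^ 2)) =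
      -(Ω ^ 2) * (1 - 4 / (3 * Real.sqrt π * ε * Ω)) := by
  intro Rh ρTF
  set a := ε ^ 2 * Ω ^ 2 / 2
  set δ := 2 / (√π * ε * Ω)
  have hδ : 0 < δ := by positivity
  have hδ1 : δ < 1 := (div_lt_one (by positivity)).mpr h
  have hRh : Rh ^ 2 = 1 - δ := sq_sqrt (by linarith)
  set H : ℝ → ℝ := fun w => (-(Ω ^ 2) * a + (ε ^ 2)⁻¹ * a ^ 2) * w ^ 2 - Ω ^ 2 * a * Rh ^ 2 * w
  have hpt : ∀ x : EuclideanSpace ℝ (Fin 2),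
      -(Ω ^ 2) * ‖x‖ ^ 2 * ρTF x + (ε ^ 2)⁻¹ * ρTF x ^ 2 = H (max (‖x‖ ^ 2 - Rh ^ 2) 0) := by
    intro x
    rcases le_total (‖x‖ ^ 2 - Rh ^ 2) 0 with hx | hx
    · simp [ρTF, H, max_eq_right hx]
    · simp only [ρTF, H, max_eq_left hx]
      ring
  have hH : ∫ w in 0..δ, H w = (-(Ω ^ 2) * a + (ε ^ 2)⁻¹ * a ^ 2) * (δ ^ 3 / 3)
      - Ω ^ 2 * a * Rh ^ 2 * (δ ^ 2 / 2) := by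
    rw [intervalIntegral.integral_sub (Continuous.intervalIntegrable (by fun_prop) _ _)
      (Continuous.intervalIntegrable (by fun_prop) _ _), intervalIntegral.integral_const_mul,
      intervalIntegral.integral_const_mul, integral_pow, integral_id]
    ring
  simp_rw [hpt]
  rw [EuclideanSpace.setIntegral_closedBall_fin_two_comp_max_norm_sq_sub (by fun_prop)
    (by simp [H]) zero_le_one (sq_nonneg _) (by linarith), one_pow, hRh, sub_sub_cancel, hH, hRh]
  have hs : √π ^ 2 = π := sq_sqrt pi_pos.le
  simp only [a, δ]
  field_simp
  rw [hs]
  ring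
end

section
/- Among all nonnegative measurable functions $\rho$ on the unit disc $B(0,1)\subset\mathbb{R}^2$ with $\int_{B(0,1)}\rho = 1$ and $\rho\in L^2$, the functional $\mathcal{E}^{TF}[\rho] = \int_{B(0,1)}\big(-\Omega^2 r^2\rho + \varepsilon^{-2}\rho^2\big)$ is uniquely minimized (a.e.) by $\rho^{TF}(r) = \tfrac12\max(\varepsilon^2\mu^{TF} + \varepsilon^2\Omega^2 r^2, 0)$ for the unique constant $\mu^{TF}$ making $\rho^{TF}$ have unit mass, provided $\sqrt{\pi}\varepsilon\Omega > 2$. -/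
/-!
Write `V = -Ω²r²` and `c = ε⁻²`. The profile `ρ₀ = ρ^TF` solves the Thomas–Fermi equation
`2cρ₀ = (μ - V)₊`, and pointwise
`Vρ + cρ² - (Vρ₀ + cρ₀²) - μ(ρ - ρ₀) = (ρ - ρ₀)(V - μ + 2cρ₀) + c(ρ - ρ₀)²`,
where the first term is nonnegative: it vanishes where `V ≤ μ`, and elsewhere `ρ₀ = 0 ≤ ρ`.
Integrating and using that `ρ` and `ρ₀` have the same mass gives
`E(ρ) ≥ E(ρ₀) + c‖ρ - ρ₀‖₂²`, hence minimality and uniqueness.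

For `μ = -Ω²a` with `0 ≤ a ≤ 1` the mass of `ρ^TF` is `πε²Ω²(1 - a)²/4` (polar coordinates).
The mass is monotone in `μ`, so it is at least `πε²Ω²/4 > 1` for `a ≤ 0` and zero for `a ≥ 1`;
hence it equals one exactly for `a = 1 - 2/(√π ε Ω)`.
-/

open MeasureTheory Real Set Metric

namespace ThomasFermi

theorem mul_sq_sub_le_of_two_mul_eq_max {c μ v r r₀ : ℝ} (hc : c ≠ 0)
    (hr₀ : 2 * c * r₀ = max (μ - v) 0) (hr : 0 ≤ r) :
    c * (r - r₀) ^ 2 ≤ (v * r + c * r ^ 2) - (v * r₀ + c * r₀ ^ 2) - μ * (r - r₀) := by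
  have key : (v * r + c * r ^ 2) - (v * r₀ + c * r₀ ^ 2) - μ * (r - r₀) - c * (r - r₀) ^ 2
      = (r - r₀) * (v - μ + 2 * c * r₀) := by ring
  rw [← sub_nonneg, key, hr₀]
  rcases le_total v μ with hvμ | hμv
  · rw [max_eq_left (by linarith)]; simp
  · have : r₀ = 0 := by
      rw [max_eq_right (by linarith)] at hr₀
      simpa [hc] using hr₀
    rw [this, max_eq_right (by linarith)]
    nlinarith

variable {α : Type*} [MeasurableSpace α] {ν : Measure α} [IsFiniteMeasure ν]
  {V ρ ρ₀ : α → ℝ} {c μ : ℝ}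

theorem memLp_two_of_two_mul_eq_max (hc : c ≠ 0) (hV : MemLp V 2 ν)
    (hρ₀ : ∀ x, 2 * c * ρ₀ x = max (μ - V x) 0) : MemLp ρ₀ 2 ν := by
  have : ρ₀ = fun x => (2 * c)⁻¹ * max (μ - V x) 0 := by
    ext x
    rw [← hρ₀, ← mul_assoc, inv_mul_cancel₀ (by simpa using hc), one_mul]
  rw [this]
  exact ((memLp_const μ).sub hV).pos_part.const_mul _

theorem energy_add_mul_integral_sq_le (hc : c ≠ 0) (hV : MemLp V 2 ν)
    (hρ₀ : ∀ x, 2 * c * ρ₀ x = max (μ - V x) 0) (hρ : MemLp ρ 2 ν) (hρ_nonneg : 0 ≤ᵐ[ν] ρ)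
    (hmass : ∫ x, ρ x ∂ν = ∫ x, ρ₀ x ∂ν) :
    ∫ x, (V x * ρ₀ x + c * ρ₀ x ^ 2) ∂ν + c * ∫ x, (ρ x - ρ₀ x) ^ 2 ∂ν
      ≤ ∫ x, (V x * ρ x + c * ρ x ^ 2) ∂ν := by
  have hρ₀_mem := memLp_two_of_two_mul_eq_max hc hV hρ₀
  have energy_integrable : ∀ {f : α → ℝ}, MemLp f 2 ν →
      Integrable (fun x => V x * f x + c * f x ^ 2) ν :=
    fun hf => (hV.integrable_mul hf).add (hf.integrable_sq.const_mul c)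
  have hE : Integrable (fun x => (V x * ρ x + c * ρ x ^ 2) - (V x * ρ₀ x + c * ρ₀ x ^ 2)) ν :=
    (energy_integrable hρ).sub (energy_integrable hρ₀_mem)
  have hmass_diff : Integrable (fun x => μ * (ρ x - ρ₀ x)) ν :=
    ((hρ.integrable one_le_two).sub (hρ₀_mem.integrable one_le_two)).const_mul μ
  have hgap : ∫ x, c * (ρ x - ρ₀ x) ^ 2 ∂ν ≤ ∫ x, ((V x * ρ x + c * ρ x ^ 2)
      - (V x * ρ₀ x + c * ρ₀ x ^ 2) - μ * (ρ x - ρ₀ x)) ∂ν :=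
    integral_mono_ae ((hρ.sub hρ₀_mem).integrable_sq.const_mul c) (hE.sub hmass_diff)
      (hρ_nonneg.mono fun x hx => mul_sq_sub_le_of_two_mul_eq_max hc (hρ₀ x) hx)
  rw [integral_sub hE hmass_diff, integral_sub (energy_integrable hρ) (energy_integrable hρ₀_mem),
    integral_const_mul μ, integral_sub (hρ.integrable one_le_two) (hρ₀_mem.integrable one_le_two),
    hmass, sub_self, mul_zero, sub_zero, integral_const_mul] at hgap
  linarith

theorem energy_le_and_ae_eq_of_energy_eq (hc : 0 < c) (hV : MemLp V 2 ν)
    (hρ₀ : ∀ x, 2 * c * ρ₀ x = max (μ - V x) 0) (hρ : MemLp ρ 2 ν) (hρ_nonneg : 0 ≤ᵐ[ν] ρ)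
    (hmass : ∫ x, ρ x ∂ν = ∫ x, ρ₀ x ∂ν) :
    ∫ x, (V x * ρ₀ x + c * ρ₀ x ^ 2) ∂ν ≤ ∫ x, (V x * ρ x + c * ρ x ^ 2) ∂ν ∧
      (∫ x, (V x * ρ x + c * ρ x ^ 2) ∂ν = ∫ x, (V x * ρ₀ x + c * ρ₀ x ^ 2) ∂ν → ρ =ᵐ[ν] ρ₀) := by
  have hstab := energy_add_mul_integral_sq_le hc.ne' hV hρ₀ hρ hρ_nonneg hmass
  have hsq_nonneg : 0 ≤ ∫ x, (ρ x - ρ₀ x) ^ 2 ∂ν := integral_nonneg fun x => sq_nonneg _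
  refine ⟨by nlinarith, fun heq => ?_⟩
  have hsq_zero : ∫ x, (ρ x - ρ₀ x) ^ 2 ∂ν = 0 := by nlinarith
  have hsq_int := (hρ.sub (memLp_two_of_two_mul_eq_max hc.ne' hV hρ₀)).integrable_sq
  filter_upwards [(integral_eq_zero_iff_of_nonneg (fun x => sq_nonneg _) hsq_int).mp hsq_zero]
    with x hx
  simpa [sub_eq_zero] using hx

end ThomasFermi

theorem integral_closedBall_fun_norm_fin_two (f : ℝ → ℝ) {R : ℝ} (hR : 0 ≤ R) :
    ∫ x in closedBall (0 : EuclideanSpace ℝ (Fin 2)) R, f ‖x‖ = 2 * π * ∫ y in 0..R, y * f y := by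
  have hball : (closedBall (0 : EuclideanSpace ℝ (Fin 2)) R).indicator (fun x => f ‖x‖)
      = fun x => (Icc 0 R).indicator f ‖x‖ := by
    ext x; by_cases hx : ‖x‖ ≤ R <;> simp [indicator, hx]
  have hIoc : (Ioi (0 : ℝ)).indicator (fun y => y * (Icc 0 R).indicator f y)
      = (Ioc 0 R).indicator (fun y => y * f y) := by
    ext y
    by_cases h0 : 0 < y
    · by_cases hyR : y ≤ R <;> simp [indicator, h0, hyR, h0.le]
    · simp [indicator, h0]
  rw [← integral_indicator measurableSet_closedBall, hball, integral_fun_norm_addHaar,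
    intervalIntegral.integral_of_le hR, ← integral_indicator measurableSet_Ioc, ← hIoc,
    integral_indicator measurableSet_Ioi]
  simp [measureReal_def, ENNReal.toReal_ofReal pi_pos.le]
  ring

theorem integral_mul_max_sq_sub {a : ℝ} (ha : 0 ≤ a) (ha1 : a ≤ 1) :
    ∫ y in 0..1, y * max (y ^ 2 - a) 0 = (1 - a) ^ 2 / 4 := by
  have hint : ∀ b c : ℝ, IntervalIntegrable (fun y => y * max (y ^ 2 - a) 0) volume b c :=
    fun b c => (by fun_prop : Continuous fun y : ℝ => y * max (y ^ 2 - a) 0).intervalIntegrable b c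
  have hs0 : 0 ≤ √a := sqrt_nonneg a
  have hs1 : √a ≤ 1 := sqrt_le_one.mpr ha1
  have inner : ∫ y in 0..√a, y * max (y ^ 2 - a) 0 = 0 := by
    have hzero : EqOn (fun y => y * max (y ^ 2 - a) 0) 0 (uIcc 0 √a) := fun y hy => by
      rw [uIcc_of_le hs0] at hy
      have : y ^ 2 ≤ a := by nlinarith [hy.1, hy.2, sq_sqrt ha]
      simp [max_eq_right (sub_nonpos.mpr this)]
    simp [intervalIntegral.integral_congr hzero]
  have outer : ∫ y in √a..1, y * max (y ^ 2 - a) 0 = (1 - a) ^ 2 / 4 := by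
    rw [intervalIntegral.integral_eq_sub_of_hasDerivAt (f := fun y => (y ^ 2 - a) ^ 2 / 4)
      (fun y hy => ?_) (hint _ _)]
    · simp [sq_sqrt ha]
    · rw [uIcc_of_le hs1] at hy
      have : a ≤ y ^ 2 := by nlinarith [hy.1, hy.2, sq_sqrt ha]
      rw [max_eq_left (sub_nonneg.mpr this)]
      refine (((hasDerivAt_pow 2 y).sub_const a).fun_pow 2).div_const 4 |>.congr_deriv ?_
      norm_num
      ring
  rw [← intervalIntegral.integral_add_adjacent_intervals (hint 0 √a) (hint √a 1), inner, outer,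
    zero_add]

theorem max_mul_zero_of_nonneg {c : ℝ} (hc : 0 ≤ c) (u : ℝ) : max (c * u) 0 = c * max u 0 := by
  rw [mul_max_of_nonneg _ _ hc, mul_zero]

section TFDensity

variable {E : Type*} [NormedAddCommGroup E] {ε Ω μ : ℝ}

noncomputable def tfDensity (ε Ω μ : ℝ) (x : E) : ℝ :=
  (1 / 2) * max (ε ^ 2 * μ + ε ^ 2 * Ω ^ 2 * ‖x‖ ^ 2) 0

theorem continuous_tfDensity : Continuous (tfDensity (E := E) ε Ω μ) := by
  unfold tfDensity; fun_prop

theorem tfDensity_le_tfDensity {μ₁ μ₂ : ℝ} (h : μ₁ ≤ μ₂) (x : E) :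
    tfDensity ε Ω μ₁ x ≤ tfDensity ε Ω μ₂ x := by
  unfold tfDensity; gcongr

theorem tfDensity_eq_mul_max (x : E) :
    tfDensity ε Ω μ x = ε ^ 2 / 2 * max (μ + Ω ^ 2 * ‖x‖ ^ 2) 0 := by
  rw [tfDensity, show ε ^ 2 * μ + ε ^ 2 * Ω ^ 2 * ‖x‖ ^ 2 = ε ^ 2 * (μ + Ω ^ 2 * ‖x‖ ^ 2) by ring,
    max_mul_zero_of_nonneg (sq_nonneg ε)]
  ring

theorem two_mul_inv_sq_mul_tfDensity (hε : ε ≠ 0) (x : E) :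
    2 * (ε ^ 2)⁻¹ * tfDensity ε Ω μ x = max (μ - -(Ω ^ 2) * ‖x‖ ^ 2) 0 := by
  rw [tfDensity_eq_mul_max, neg_mul, sub_neg_eq_add]
  field_simp

end TFDensity

theorem integral_tfDensity_neg_mul {ε Ω a : ℝ} (ha0 : 0 ≤ a) (ha1 : a ≤ 1) :
    ∫ x in closedBall (0 : EuclideanSpace ℝ (Fin 2)) 1, tfDensity ε Ω (-(Ω ^ 2) * a) x
      = π * ε ^ 2 * Ω ^ 2 * (1 - a) ^ 2 / 4 := by
  have hρ : ∀ x : EuclideanSpace ℝ (Fin 2),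
      tfDensity ε Ω (-(Ω ^ 2) * a) x = ε ^ 2 * Ω ^ 2 / 2 * max (‖x‖ ^ 2 - a) 0 := fun x => by
    rw [tfDensity_eq_mul_max, show -(Ω ^ 2) * a + Ω ^ 2 * ‖x‖ ^ 2 = Ω ^ 2 * (‖x‖ ^ 2 - a) by ring,
      max_mul_zero_of_nonneg (sq_nonneg Ω)]
    ring
  simp_rw [hρ]
  rw [integral_const_mul,
    integral_closedBall_fun_norm_fin_two (fun r => max (r ^ 2 - a) 0) zero_le_one,
    integral_mul_max_sq_sub ha0 ha1]
  ring

theorem integral_tfDensity_mono {ε Ω μ₁ μ₂ : ℝ} (h : μ₁ ≤ μ₂) :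
    ∫ x in closedBall (0 : EuclideanSpace ℝ (Fin 2)) 1, tfDensity ε Ω μ₁ x
      ≤ ∫ x in closedBall (0 : EuclideanSpace ℝ (Fin 2)) 1, tfDensity ε Ω μ₂ x :=
  integral_mono (continuous_tfDensity.continuousOn.integrableOn_compact (isCompact_closedBall 0 1))
    (continuous_tfDensity.continuousOn.integrableOn_compact (isCompact_closedBall 0 1))
    (tfDensity_le_tfDensity h)

theorem integral_tfDensity_eq_one_iff {ε Ω μ : ℝ} (h : 2 < √π * ε * Ω) :
    ∫ x in closedBall (0 : EuclideanSpace ℝ (Fin 2)) 1, tfDensity ε Ω μ x = 1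
      ↔ μ = -Ω ^ 2 * (1 - 2 / (√π * ε * Ω)) := by
  set b := √π * ε * Ω with hb_def
  have hb : 0 < b := by linarith
  have hΩ : Ω ≠ 0 := by rintro rfl; simp [hb_def] at hb
  have hb2 : π * ε ^ 2 * Ω ^ 2 = b ^ 2 := by
    rw [hb_def, mul_pow, mul_pow, sq_sqrt pi_pos.le]
  obtain ⟨a, rfl⟩ : ∃ a, μ = -(Ω ^ 2) * a := ⟨-μ / Ω ^ 2, by field_simp⟩
  have mass : ∀ {a}, 0 ≤ a → a ≤ 1 → ∫ x in closedBall (0 : EuclideanSpace ℝ (Fin 2)) 1,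
      tfDensity ε Ω (-(Ω ^ 2) * a) x = b ^ 2 * (1 - a) ^ 2 / 4 := fun ha0 ha1 => by
    rw [integral_tfDensity_neg_mul ha0 ha1, hb2]
  have hΩ2 : 0 < Ω ^ 2 := by positivity
  constructor
  · intro hmass_one
    have ha0 : 0 < a := by
      by_contra! ha0
      have := integral_tfDensity_mono (ε := ε) (Ω := Ω)
        (show -(Ω ^ 2) * 0 ≤ -(Ω ^ 2) * a by nlinarith)
      rw [mass le_rfl zero_le_one, hmass_one] at this
      nlinarith
    have ha1 : a < 1 := by
      by_contra! ha1
      have := integral_tfDensity_mono (ε := ε) (Ω := Ω)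
        (show -(Ω ^ 2) * a ≤ -(Ω ^ 2) * 1 by nlinarith)
      rw [mass zero_le_one le_rfl, hmass_one] at this
      norm_num at this
    rw [mass ha0.le ha1.le] at hmass_one
    have : b * (1 - a) = 2 := by nlinarith [mul_pos hb (sub_pos.mpr ha1)]
    field_simp
    linarith
  · intro hμ
    have ha : a = 1 - 2 / b := mul_left_cancel₀ (neg_ne_zero.mpr hΩ2.ne') (by linarith)
    have h2b : 0 < 2 / b ∧ 2 / b < 1 := ⟨by positivity, (div_lt_one hb).mpr h⟩
    rw [ha, mass (by linarith) (by linarith)]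
    field_simp
    ring

theorem stmt_2_general (ε Ω : ℝ)
    (h : 2 < Real.sqrt π * ε * Ω) :
    let D : Set (EuclideanSpace ℝ (Fin 2)) := Metric.closedBall 0 1
    let ρTF : ℝ → EuclideanSpace ℝ (Fin 2) → ℝ :=
      fun μ x => (1 / 2) * max (ε ^ 2 * μ + ε ^ 2 * Ω ^ 2 * ‖x‖ ^ 2) 0
    let ETF : (EuclideanSpace ℝ (Fin 2) → ℝ) → ℝ :=
      fun ρ => ∫ x in D, (-(Ω ^ 2) * ‖x‖ ^ 2 * ρ x + (ε ^ 2)⁻¹ * ρ x ^ 2)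
    ∃ μTF : ℝ,
      (∫ x in D, ρTF μTF x) = 1 ∧
      (∀ μ' : ℝ, (∫ x in D, ρTF μ' x) = 1 → μ' = μTF) ∧
      ∀ ρ : EuclideanSpace ℝ (Fin 2) → ℝ, Measurable ρ → (∀ x, 0 ≤ ρ x) →
        (∫ x in D, ρ x) = 1 → MemLp ρ 2 (volume.restrict D) →
        ETF (ρTF μTF) ≤ ETF ρ ∧
        (ETF ρ = ETF (ρTF μTF) → ∀ᵐ x ∂(volume.restrict D), ρ x = ρTF μTF x) := by
  intro D ρTF ETF
  have hε : ε ≠ 0 := by rintro rfl; norm_num at h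
  have hmass := (integral_tfDensity_eq_one_iff (μ := -Ω ^ 2 * (1 - 2 / (√π * ε * Ω))) h).mpr rfl
  have : IsFiniteMeasure (volume.restrict D) :=
    isFiniteMeasure_restrict.mpr measure_closedBall_lt_top.ne
  have hV : MemLp (fun x : EuclideanSpace ℝ (Fin 2) => -(Ω ^ 2) * ‖x‖ ^ 2) 2 (volume.restrict D) :=
    (memLp_two_iff_integrable_sq (by fun_prop)).mpr
      ((by fun_prop : Continuous _).continuousOn.integrableOn_compact (isCompact_closedBall 0 1))
  refine ⟨_, hmass, fun μ' hμ' => (integral_tfDensity_eq_one_iff h).mp hμ',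
    fun ρ _ hρ_nonneg hρ_mass hρ => ?_⟩
  exact ThomasFermi.energy_le_and_ae_eq_of_energy_eq (by positivity) hV
    (two_mul_inv_sq_mul_tfDensity hε) hρ (ae_of_all _ hρ_nonneg) (hρ_mass.trans hmass.symm)

/-- The TF functional `E^TF[ρ] = ∫_{B(0,1)} (-Ω² r² ρ + ε⁻² ρ²)` over nonnegative `L²`
densities of unit mass is uniquely (a.e.) minimized by
`ρ^TF(r) = ½ max(ε²μ^TF + ε²Ω²r², 0)`, where `μ^TF` is the unique constant giving unit mass. -/
theorem stmt_2 (ε Ω : ℝ) (hε : 0 < ε) (hΩ : 0 < Ω)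
    (h : 2 < Real.sqrt π * ε * Ω) :
    let D : Set (EuclideanSpace ℝ (Fin 2)) := Metric.closedBall 0 1
    let ρTF : ℝ → EuclideanSpace ℝ (Fin 2) → ℝ :=
      fun μ x => (1 / 2) * max (ε ^ 2 * μ + ε ^ 2 * Ω ^ 2 * ‖x‖ ^ 2) 0
    let ETF : (EuclideanSpace ℝ (Fin 2) → ℝ) → ℝ :=
      fun ρ => ∫ x in D, (-(Ω ^ 2) * ‖x‖ ^ 2 * ρ x + (ε ^ 2)⁻¹ * ρ x ^ 2)
    ∃ μTF : ℝ,
      (∫ x in D, ρTF μTF x) = 1 ∧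
      (∀ μ' : ℝ, (∫ x in D, ρTF μ' x) = 1 → μ' = μTF) ∧
      ∀ ρ : EuclideanSpace ℝ (Fin 2) → ℝ, Measurable ρ → (∀ x, 0 ≤ ρ x) →
        (∫ x in D, ρ x) = 1 → MemLp ρ 2 (volume.restrict D) →
        ETF (ρTF μTF) ≤ ETF ρ ∧
        (ETF ρ = ETF (ρTF μTF) → ∀ᵐ x ∂(volume.restrict D), ρ x = ρTF μTF x) :=
  stmt_2_general ε Ω h
end

section
/- For $\Omega_1 \in \mathbb{R}$, define $k(z) = z\big(\tfrac{2}{\pi} - 3\Omega_1 - 2z(\tfrac{2}{\sqrt{\pi}} - z)\big)$ for $z\in[0, 2/\sqrt{\pi}]$. If $0 < \Omega_1$ and $\tfrac{1}{9\pi}+\tfrac{\Omega_1}{2} < \tfrac{4}{9\pi}$, then $z_2 = \tfrac{2}{3\sqrt{\pi}} + \sqrt{\tfrac{1}{9\pi}+\tfrac{\Omega_1}{2}}$ lies in $(0, 2/\sqrt{\pi})$, is a critical point of $k$ (i.e. $k'(z_2)=0$), and satisfies $k(z_2) < 0$. -/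
/-!
Write `a = 1/√π`, so that `k z = z (2 (z - a)² - 3Ω₁)` and `k' z = 6z² - 8az + 2a² - 3Ω₁`.
The quadratic formula gives the larger critical point `z₂ = 2a/3 + r` with `r² = a²/9 + Ω₁/2`.
The hypotheses say exactly `a/3 < r < 2a/3`, which puts `z₂` in `(a, 4a/3)`, and the second
factor of `k z₂` equals `-4 (r - a/3)(r + 2a/3) < 0`.
-/

open Real

theorem hasDerivAt_cubic (a c z : ℝ) :
    HasDerivAt (fun z => z * (2 * a ^ 2 - 3 * c - 2 * z * (2 * a - z)))
      (6 * z ^ 2 - 8 * a * z + 2 * a ^ 2 - 3 * c) z := by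
  have h := ((hasDerivAt_id' z).mul_const (2 * a ^ 2 - 3 * c)).sub
    (((hasDerivAt_pow 2 z).const_mul (4 * a)).sub ((hasDerivAt_pow 3 z).const_mul 2))
  refine (h.congr_deriv ?_).congr_of_eventuallyEq (.of_forall fun y => ?_)
  · norm_num; ring
  · simp only [Pi.sub_apply]; ring

section CriticalPoint

variable {a c r : ℝ}

theorem cubic_deriv_eq_zero_of_sq_eq (hr : r ^ 2 = a ^ 2 / 9 + c / 2) :
    6 * (2 * a / 3 + r) ^ 2 - 8 * a * (2 * a / 3 + r) + 2 * a ^ 2 - 3 * c = 0 := by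
  linear_combination 6 * hr

theorem cubic_factor_of_sq_eq (hr : r ^ 2 = a ^ 2 / 9 + c / 2) :
    2 * a ^ 2 - 3 * c - 2 * (2 * a / 3 + r) * (2 * a - (2 * a / 3 + r))
      = -4 * (r - a / 3) * (r + 2 * a / 3) := by
  linear_combination 6 * hr

theorem cubic_neg_at_critical_point (ha : 0 < a) (hr : r ^ 2 = a ^ 2 / 9 + c / 2)
    (hr_gt : a / 3 < r) :
    (2 * a / 3 + r) * (2 * a ^ 2 - 3 * c - 2 * (2 * a / 3 + r) * (2 * a - (2 * a / 3 + r)))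
      < 0 := by
  rw [cubic_factor_of_sq_eq hr]
  have hr_pos : 0 < r := by linarith
  exact mul_neg_of_pos_of_neg (by positivity)
    (by nlinarith [mul_pos (sub_pos.2 hr_gt) (by positivity : 0 < r + 2 * a / 3)])

end CriticalPoint

theorem cubic_critical_point (a c : ℝ) (ha : 0 < a) (hc : 0 < c) (hca : c < 2 * a ^ 2 / 3) :
    let k : ℝ → ℝ := fun z => z * (2 * a ^ 2 - 3 * c - 2 * z * (2 * a - z))
    let z2 : ℝ := 2 * a / 3 + √(a ^ 2 / 9 + c / 2)
    0 < z2 ∧ z2 < 2 * a ∧ deriv k z2 = 0 ∧ k z2 < 0 := by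
  set r := √(a ^ 2 / 9 + c / 2)
  intro k z2
  have hr : r ^ 2 = a ^ 2 / 9 + c / 2 := sq_sqrt (by positivity)
  have hr_gt : a / 3 < r := (lt_sqrt (by positivity)).2 (by linarith)
  have hr_lt : r < 2 * a / 3 := (sqrt_lt' (by positivity)).2 (by linarith)
  have hz2 : z2 = 2 * a / 3 + r := rfl
  refine ⟨by linarith, by linarith, ?_, cubic_neg_at_critical_point ha hr hr_gt⟩
  rw [(hasDerivAt_cubic a c z2).deriv]
  exact cubic_deriv_eq_zero_of_sq_eq hr

/-- For `0 < Ω₁` with `1/(9π) + Ω₁/2 < 4/(9π)`, the point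
`z₂ = 2/(3√π) + √(1/(9π)+Ω₁/2)` lies in `(0, 2/√π)`, is a critical point of the
cost cubic `k`, and `k(z₂) < 0`. -/
theorem stmt_3 (Ω1 : ℝ) (h0 : 0 < Ω1) (h1 : 1 / (9 * π) + Ω1 / 2 < 4 / (9 * π)) :
    let k : ℝ → ℝ := fun z => z * (2 / π - 3 * Ω1 - 2 * z * (2 / Real.sqrt π - z))
    let z2 : ℝ := 2 / (3 * Real.sqrt π) + Real.sqrt (1 / (9 * π) + Ω1 / 2)
    0 < z2 ∧ z2 < 2 / Real.sqrt π ∧ deriv k z2 = 0 ∧ k z2 < 0 := by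
  set a := (√π)⁻¹
  have ha : 0 < a := inv_pos.2 (sqrt_pos.2 pi_pos)
  have ha_sq : a ^ 2 = π⁻¹ := by rw [inv_pow, sq_sqrt pi_pos.le]
  have hΩ : Ω1 < 2 * a ^ 2 / 3 := by
    rw [ha_sq]; linarith [show 4 / (9 * π) - 1 / (9 * π) = π⁻¹ / 3 by ring]
  rw [show 2 / π = 2 * a ^ 2 by rw [ha_sq]; ring, show 2 / √π = 2 * a by ring,
    show 2 / (3 * √π) = 2 * a / 3 by ring, show 1 / (9 * π) = a ^ 2 / 9 by rw [ha_sq]; ring]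
  exact cubic_critical_point a Ω1 ha h0 hΩ
end

section
/- Let $\Omega_1 > 0$ be small and $k(z) = z\big(\tfrac{2}{\pi} - 3\Omega_1 - 2z(\tfrac{2}{\sqrt{\pi}} - z)\big)$ on $[0,2/\sqrt{\pi}]$, with $z_2 = \tfrac{2}{3\sqrt{\pi}} + \sqrt{\tfrac{1}{9\pi}+\tfrac{\Omega_1}{2}}$. Then there exist constants $k_1,k_2,k_3,\delta > 0$ such that for all $\Omega_1\in(0,\delta)$ and all $z\in[0,2/\sqrt{\pi}]$ with $|z - z_2| > k_1\Omega_1^{1/4}$ and $z > k_2\Omega_1^{1/2}$, one has $k(z) > k_3\Omega_1^{1/2}$. -/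
/-!
With `a = 1/√π` the cubic factors as `k(z) = z (2 (z - a)² - 3 Ω₁)`, and its local minimum
`z₂ = 2a/3 + √(a²/9 + Ω₁/2)` lies within `O(Ω₁)` of the double root `a` of `k` at `Ω₁ = 0`.
For `z ≤ a/2` the quadratic factor is bounded below by a constant, so `k(z) ≳ z > √Ω₁`.
For `z > a/2`, staying `Ω₁^{1/4}` away from `z₂` keeps `z` at distance `≳ Ω₁^{1/4}` from `a`,
so the quadratic factor is `≳ √Ω₁` while `z` is bounded below by a constant.
-/

open Real

noncomputable section

def costCubic (a Ω z : ℝ) : ℝ := z * (2 * (z - a) ^ 2 - 3 * Ω)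

def costCubicLocalMin (a Ω : ℝ) : ℝ := 2 * a / 3 + √((a / 3) ^ 2 + Ω / 2)

end

lemma costCubic_sqrt_inv {x : ℝ} (hx : 0 < x) (Ω z : ℝ) :
    z * (2 / x - 3 * Ω - 2 * z * (2 / √x - z)) = costCubic (√x)⁻¹ Ω z := by
  obtain ⟨s, hs, rfl⟩ : ∃ s > 0, x = s ^ 2 := ⟨√x, sqrt_pos.mpr hx, (sq_sqrt hx.le).symm⟩
  rw [costCubic, sqrt_sq hs.le]
  field_simp
  ring

lemma costCubicLocalMin_sqrt_inv {x : ℝ} (hx : 0 < x) (Ω : ℝ) :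
    2 / (3 * √x) + √(1 / (9 * x) + Ω / 2) = costCubicLocalMin (√x)⁻¹ Ω := by
  obtain ⟨s, hs, rfl⟩ : ∃ s > 0, x = s ^ 2 := ⟨√x, sqrt_pos.mpr hx, (sq_sqrt hx.le).symm⟩
  rw [costCubicLocalMin, sqrt_sq hs.le]
  have hsq : 1 / (9 * s ^ 2) = (s⁻¹ / 3) ^ 2 := by
    field_simp
    ring
  rw [hsq]
  ring

lemma le_sqrt_sq_add {b x : ℝ} (hx : 0 ≤ x) : b ≤ √(b ^ 2 + x) :=
  le_sqrt_of_sq_le (by linarith)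

lemma sqrt_sq_add_le {b x : ℝ} (hb : 0 < b) (hx : 0 ≤ x) : √(b ^ 2 + x) ≤ b + x / (2 * b) := by
  have hexpand : (b + x / (2 * b)) ^ 2 = b ^ 2 + x + (x / (2 * b)) ^ 2 := by
    field_simp
    ring
  exact sqrt_le_iff.mpr ⟨by positivity, by nlinarith [sq_nonneg (x / (2 * b))]⟩

lemma abs_costCubicLocalMin_sub_le {a Ω : ℝ} (ha : 0 < a) (hΩ : 0 ≤ Ω) :
    |costCubicLocalMin a Ω - a| ≤ 3 * Ω / (4 * a) := by
  have hlo := le_sqrt_sq_add (b := a / 3) (by positivity : 0 ≤ Ω / 2)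
  have hhi := sqrt_sq_add_le (b := a / 3) (by positivity) (by positivity : 0 ≤ Ω / 2)
  have hratio : Ω / 2 / (2 * (a / 3)) = 3 * Ω / (4 * a) := by
    field_simp
    ring
  rw [costCubicLocalMin, abs_le]
  constructor <;> linarith [div_nonneg (mul_nonneg zero_le_three hΩ) (by positivity : 0 ≤ 4 * a)]

lemma div_ten_le_costCubic {a Ω z : ℝ} (ha : 1 / 2 < a) (hΩ : Ω < 1 / 120) (hz₀ : 0 ≤ z)
    (hz : z ≤ a / 2) : z / 10 ≤ costCubic a Ω z := by
  have hfactor : 1 / 10 ≤ 2 * (z - a) ^ 2 - 3 * Ω := by nlinarith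
  unfold costCubic
  nlinarith

lemma sq_div_four_lt_costCubic {a q z : ℝ} (ha : 1 / 2 < a) (hq : 0 < q) (hq_small : q < 1 / 4)
    (hz : a / 2 < z) (hfar : q < |z - costCubicLocalMin a (q ^ 4)|) :
    q ^ 2 / 4 < costCubic a (q ^ 4) z := by
  have hmin := abs_costCubicLocalMin_sub_le (by linarith : 0 < a) (by positivity : 0 ≤ q ^ 4)
  have hmin' : 3 * q ^ 4 / (4 * a) ≤ 3 * q ^ 4 / 2 :=
    div_le_div_of_nonneg_left (by positivity) two_pos (by linarith)
  have htri :
      |z - costCubicLocalMin a (q ^ 4)| ≤ |z - a| + |costCubicLocalMin a (q ^ 4) - a| := by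
    simpa only [abs_sub_comm a] using abs_sub_le z a (costCubicLocalMin a (q ^ 4))
  have hq3 : q ^ 3 < 1 / 64 := by
    calc q ^ 3 < (1 / 4) ^ 3 := pow_lt_pow_left₀ hq_small hq.le three_ne_zero
      _ = 1 / 64 := by norm_num
  have hdist : 125 / 128 * q ≤ |z - a| := by
    have : q * q ^ 3 < q * (1 / 64) := mul_lt_mul_of_pos_left hq3 hq
    nlinarith
  have hfactor : q ^ 2 ≤ 2 * (z - a) ^ 2 - 3 * q ^ 4 := by
    have hq4 : q ^ 4 < q ^ 2 / 16 := by
      have hq2 : q ^ 2 < 1 / 16 := by nlinarith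
      nlinarith [mul_lt_mul_of_pos_left hq2 (pow_pos hq 2)]
    rw [← sq_abs (z - a)]
    nlinarith [mul_self_le_mul_self (by positivity) hdist]
  unfold costCubic
  nlinarith [mul_le_mul_of_nonneg_left hfactor (by linarith : 0 ≤ z),
    mul_lt_mul_of_pos_right (by linarith : 1 / 4 < z) (pow_pos hq 2)]

/-- For small `Ω₁ > 0`, the cost cubic `k` is bounded below by `k₃ √Ω₁` on the part
of `[0, 2/√π]` away from its two near-zeros `0` and `z₂`. -/
theorem stmt_6 :
    ∃ k1 > (0 : ℝ), ∃ k2 > (0 : ℝ), ∃ k3 > (0 : ℝ), ∃ δ > (0 : ℝ),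
      ∀ Ω1 : ℝ, 0 < Ω1 → Ω1 < δ →
        ∀ z ∈ Set.Icc (0 : ℝ) (2 / Real.sqrt π),
          |z - (2 / (3 * Real.sqrt π) + Real.sqrt (1 / (9 * π) + Ω1 / 2))| >
              k1 * Ω1 ^ ((1 : ℝ) / 4) →
          z > k2 * Real.sqrt Ω1 →
          z * (2 / π - 3 * Ω1 - 2 * z * (2 / Real.sqrt π - z)) > k3 * Real.sqrt Ω1 := by
  refine ⟨1, one_pos, 1, one_pos, 1 / 10, by norm_num, 1 / 256, by norm_num, ?_⟩
  intro Ω hΩ hΩδ z _ hfar hz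
  -- writing `Ω₁ = q⁴` turns `Ω₁^{1/4}` and `√Ω₁` into the monomials `q` and `q²`
  obtain ⟨q, hq, rfl⟩ : ∃ q > 0, Ω = q ^ 4 :=
    ⟨Ω ^ (4⁻¹ : ℝ), by positivity, (rpow_inv_natCast_pow hΩ.le four_ne_zero).symm⟩
  have hq_rpow : (q ^ 4) ^ ((1 : ℝ) / 4) = q := by
    simpa using pow_rpow_inv_natCast hq.le four_ne_zero
  have hq_sqrt : √(q ^ 4) = q ^ 2 := by
    rw [show q ^ 4 = (q ^ 2) ^ 2 by ring, sqrt_sq (sq_nonneg q)]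
  have hq_small : q < 1 / 4 := by
    refine (pow_lt_pow_iff_left₀ hq.le (by norm_num) four_ne_zero).mp ?_
    linarith
  have ha : 1 / 2 < (√π)⁻¹ := by
    rw [one_div, inv_lt_inv₀ two_pos (sqrt_pos.mpr pi_pos), sqrt_lt' two_pos]
    linarith [pi_lt_four]
  rw [hq_rpow, one_mul, costCubicLocalMin_sqrt_inv pi_pos] at hfar
  rw [hq_sqrt, one_mul] at hz
  rw [hq_sqrt, costCubic_sqrt_inv pi_pos]
  rcases le_or_gt z ((√π)⁻¹ / 2) with hsmall | hlarge
  · have hz₀ : 0 ≤ z := (sq_nonneg q).trans hz.le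
    linarith [div_ten_le_costCubic (Ω := q ^ 4) ha (by linarith) hz₀ hsmall]
  · linarith [sq_div_four_lt_costCubic ha hq hq_small hlarge hfar, pow_pos hq 2]
end

section
/- With notation as above ($0 < R_< < R_* < 1$, $g^2$ continuous positive, $A = \int_{R_<}^{R_*} g^2(s)s^{-1}ds$, $B = \int_{R_*}^{1} g^2(s)s^{-1}ds$, and $h_*$ the associated potential of the normalized arclength measure $\delta_*$), the electrostatic energy satisfies $I_* := \int_{\mathcal{A}} \tfrac{1}{g^2}|\nabla h_*|^2 \,dx = \tfrac{AB}{2\pi(A+B)} = h_*(R_*)$. -/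
/-!
Write `C = AB/(2π(A+B))` and `w(r) = g²(r)/r`. Off the circle `r = R_*` the radial potential
`h_*` has derivative `(C/A) w` inside and `-(C/B) w` outside, so the energy density
`r g⁻² h_*'²` in polar coordinates is `(C/A)² w`, resp. `(C/B)² w`. Integrating,
`I_* = 2π (C²/A + C²/B) = C`, while `h_*(R_*) = C · A⁻¹ · A = C`.
-/

open MeasureTheory Real Set
open scoped Interval

theorem ae_norm_ne {E : Type*} [NormedAddCommGroup E] [NormedSpace ℝ E] [MeasurableSpace E]
    [BorelSpace E] [FiniteDimensional ℝ E] [Nontrivial E] (μ : Measure E) [μ.IsAddHaarMeasure]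
    (c : ℝ) : ∀ᵐ x ∂μ, ‖x‖ ≠ c := by
  filter_upwards [measure_eq_zero_iff_ae_notMem.mp (Measure.addHaar_sphere μ 0 c)] with x hx
  rwa [mem_sphere_zero_iff_norm] at hx

theorem norm_gradient_comp_norm {E : Type*} [NormedAddCommGroup E] [InnerProductSpace ℝ E]
    [CompleteSpace E] {h : ℝ → ℝ} {d : ℝ} {x : E} (hx : x ≠ 0) (hh : HasDerivAt h d ‖x‖) :
    ‖gradient (fun y => h ‖y‖) x‖ = |d| := by
  have : Nontrivial E := ⟨⟨x, 0, hx⟩⟩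
  have hnorm : DifferentiableAt ℝ (‖·‖) x := (contDiffAt_norm ℝ hx).differentiableAt one_ne_zero
  have hcomp : HasFDerivAt (fun y => h ‖y‖) (d • fderiv ℝ (‖·‖) x) x :=
    hh.comp_hasFDerivAt x hnorm.hasFDerivAt
  rw [hcomp.hasGradientAt.gradient, LinearIsometryEquiv.norm_map, norm_smul,
    norm_fderiv_norm hnorm, mul_one, Real.norm_eq_abs]

theorem setIntegral_annulus_fun_norm {a b : ℝ} (ha : 0 ≤ a) (hab : a ≤ b) (f : ℝ → ℝ) :
    ∫ x in {x : EuclideanSpace ℝ (Fin 2) | a ≤ ‖x‖ ∧ ‖x‖ ≤ b}, f ‖x‖ =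
      2 * π * ∫ r in a..b, r * f r := by
  have hball : volume.real (Metric.ball (0 : EuclideanSpace ℝ (Fin 2)) 1) = π := by
    rw [measureReal_def, EuclideanSpace.volume_ball (Fin 2) 0 1]
    norm_num [Real.sq_sqrt Real.pi_nonneg, Real.Gamma_two, ENNReal.toReal_ofReal Real.pi_nonneg]
  have hset : {x : EuclideanSpace ℝ (Fin 2) | a ≤ ‖x‖ ∧ ‖x‖ ≤ b} = (‖·‖) ⁻¹' Icc a b := rfl
  rw [hset, ← integral_indicator (measurableSet_Icc.preimage measurable_norm),
    show ((‖·‖) ⁻¹' Icc a b).indicator (fun x : EuclideanSpace ℝ (Fin 2) => f ‖x‖) =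
      fun x => (Icc a b).indicator f ‖x‖ from rfl,
    integral_fun_norm_addHaar, finrank_euclideanSpace_fin, hball]
  simp only [smul_eq_mul]
  have hIcc : (Icc a b).indicator (fun r => r * f r) =ᵐ[volume.restrict (Ioi 0)]
      (Ioc a b).indicator (fun r => r * f r) :=
    ae_restrict_of_ae (indicator_ae_eq_of_ae_eq_set Ioc_ae_eq_Icc.symm)
  have hmul : (fun y => y ^ (2 - 1) * (Icc a b).indicator f y) =
      (Icc a b).indicator (fun r => r * f r) := by
    ext y
    rw [pow_one, indicator_mul_right]
  rw [hmul, integral_congr_ae hIcc, setIntegral_indicator measurableSet_Ioc,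
    inter_eq_right.mpr (Ioc_subset_Ioi_self.trans (Ioi_subset_Ioi ha)),
    ← intervalIntegral.integral_of_le hab]
  ring

theorem setIntegral_annulus_eq_of_eq_fun_norm {F : EuclideanSpace ℝ (Fin 2) → ℝ} {f : ℝ → ℝ}
    {a b c : ℝ} (ha : 0 ≤ a) (hab : a ≤ b)
    (hF : ∀ x, a < ‖x‖ → ‖x‖ < b → ‖x‖ ≠ c → F x = f ‖x‖) :
    ∫ x in {x : EuclideanSpace ℝ (Fin 2) | a ≤ ‖x‖ ∧ ‖x‖ ≤ b}, F x =
      2 * π * ∫ r in a..b, r * f r := by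
  rw [← setIntegral_annulus_fun_norm ha hab]
  refine setIntegral_congr_ae
    ((measurableSet_le measurable_const measurable_norm).inter
      (measurableSet_le measurable_norm measurable_const)) ?_
  filter_upwards [ae_norm_ne volume a, ae_norm_ne volume b, ae_norm_ne volume c]
    with x hxa hxb hxc hx
  exact hF x (hx.1.lt_of_ne' hxa) (hx.2.lt_of_ne hxb) hxc

theorem hasDerivAt_integral_right_of_continuousOn {f : ℝ → ℝ} {a b r : ℝ}
    (hf : ContinuousOn f (Icc a b)) (hr : r ∈ Ioo a b) :
    HasDerivAt (fun t => ∫ s in a..t, f s) (f r) r := by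
  have hnhds : Icc a b ∈ nhds r := Icc_mem_nhds hr.1 hr.2
  exact intervalIntegral.integral_hasDerivAt_right
    ((hf.mono (Icc_subset_Icc_right hr.2.le)).intervalIntegrable_of_Icc hr.1.le)
    ⟨_, hnhds, hf.aestronglyMeasurable measurableSet_Icc⟩ (hf.continuousAt hnhds)

theorem hasDerivAt_integral_left_of_continuousOn {f : ℝ → ℝ} {a b r : ℝ}
    (hf : ContinuousOn f (Icc a b)) (hr : r ∈ Ioo a b) :
    HasDerivAt (fun t => ∫ s in t..b, f s) (-f r) r := by
  have hnhds : Icc a b ∈ nhds r := Icc_mem_nhds hr.1 hr.2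
  exact intervalIntegral.integral_hasDerivAt_left
    ((hf.mono (Icc_subset_Icc_left hr.1.le)).intervalIntegrable_of_Icc hr.2.le)
    ⟨_, hnhds, hf.aestronglyMeasurable measurableSet_Icc⟩ (hf.continuousAt hnhds)

theorem hasDerivAt_piecewise_integral {f : ℝ → ℝ} {a b c α β r : ℝ}
    (hf : ContinuousOn f (Icc a b)) (hr : r ∈ Ioo a b) (hrc : r ≠ c) :
    HasDerivAt (fun t => if t ≤ c then α * ∫ s in a..t, f s else β * ∫ s in t..b, f s)
      (if r ≤ c then α * f r else -(β * f r)) r := by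
  rcases hrc.lt_or_gt with hlt | hgt
  · rw [if_pos hlt.le]
    refine ((hasDerivAt_integral_right_of_continuousOn hf hr).const_mul α).congr_of_eventuallyEq ?_
    filter_upwards [Iio_mem_nhds hlt] with t ht
    rw [if_pos (le_of_lt ht)]
  · rw [if_neg hgt.not_ge, ← mul_neg]
    refine ((hasDerivAt_integral_left_of_continuousOn hf hr).const_mul β).congr_of_eventuallyEq ?_
    filter_upwards [Ioi_mem_nhds hgt] with t ht
    rw [if_neg (not_le.mpr ht)]

theorem integral_mul_inv_mul_sq_piecewise {g : ℝ → ℝ} {a b c α β : ℝ} (hac : a ≤ c) (hcb : c ≤ b)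
    (hac_int : IntervalIntegrable (fun r => g r / r) volume a c)
    (hcb_int : IntervalIntegrable (fun r => g r / r) volume c b) :
    ∫ r in a..b, r * ((g r)⁻¹ * (if r ≤ c then α * (g r / r) else -(β * (g r / r))) ^ 2) =
      α ^ 2 * (∫ r in a..c, g r / r) + β ^ 2 * ∫ r in c..b, g r / r := by
  set F := fun r => r * ((g r)⁻¹ * (if r ≤ c then α * (g r / r) else -(β * (g r / r))) ^ 2)
  have density (γ r : ℝ) : r * ((g r)⁻¹ * (γ * (g r / r)) ^ 2) = γ ^ 2 * (g r / r) := by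
    rcases eq_or_ne (g r) 0 with hg | hg
    · simp [hg]
    rcases eq_or_ne r 0 with hr | hr
    · simp [hr]
    field_simp
  have hleft : F =ᵐ[volume.restrict (Ι a c)] fun r => α ^ 2 * (g r / r) := by
    filter_upwards [ae_restrict_mem measurableSet_uIoc] with r hr
    rw [uIoc_of_le hac] at hr
    simp only [F, if_pos hr.2, density]
  have hright : F =ᵐ[volume.restrict (Ι c b)] fun r => β ^ 2 * (g r / r) := by
    filter_upwards [ae_restrict_mem measurableSet_uIoc] with r hr
    rw [uIoc_of_le hcb] at hr
    simp only [F, if_neg (not_le.mpr hr.1), neg_sq, density]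
  rw [← intervalIntegral.integral_add_adjacent_intervals
      ((hac_int.const_mul _).congr_ae hleft.symm) ((hcb_int.const_mul _).congr_ae hright.symm),
    intervalIntegral.integral_congr_ae_restrict hleft,
    intervalIntegral.integral_congr_ae_restrict hright,
    intervalIntegral.integral_const_mul, intervalIntegral.integral_const_mul]

theorem intervalIntegral_pos_of_continuousOn {f : ℝ → ℝ} {a b u v : ℝ}
    (hf : ContinuousOn f (Icc a b)) (hpos : ∀ s ∈ Icc a b, 0 < f s)
    (hu : a ≤ u) (huv : u < v) (hv : v ≤ b) : 0 < ∫ s in u..v, f s :=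
  intervalIntegral.intervalIntegral_pos_of_pos_on
    ((hf.mono (Icc_subset_Icc hu hv)).intervalIntegrable_of_Icc huv.le)
    (fun s hs => hpos s ⟨hu.trans hs.1.le, hs.2.le.trans hv⟩) huv

/-- The electrostatic energy of the equilibrium potential `h_*` of `δ_*`:
`I_* = ∫_𝒜 g⁻² |∇h_*|² = AB/(2π(A+B)) = h_*(R_*)`. -/
theorem stmt_9 (Rlt Rstar : ℝ) (h0 : 0 < Rlt) (h1 : Rlt < Rstar) (h2 : Rstar < 1)
    (g2 : ℝ → ℝ) (hg2c : ContinuousOn g2 (Set.Icc Rlt 1))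
    (hg2pos : ∀ s ∈ Set.Icc Rlt 1, 0 < g2 s) :
    let A : ℝ := ∫ s in Rlt..Rstar, g2 s / s
    let B : ℝ := ∫ s in Rstar..(1 : ℝ), g2 s / s
    let hstar : ℝ → ℝ := fun r =>
      if r ≤ Rstar then A * B / (2 * π * (A + B)) * (A⁻¹ * ∫ s in Rlt..r, g2 s / s)
      else A * B / (2 * π * (A + B)) * (B⁻¹ * ∫ s in r..(1 : ℝ), g2 s / s)
    (∫ x in {x : EuclideanSpace ℝ (Fin 2) | Rlt ≤ ‖x‖ ∧ ‖x‖ ≤ 1},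
        (g2 ‖x‖)⁻¹ * ‖gradient (fun y => hstar ‖y‖) x‖ ^ 2) =
      A * B / (2 * π * (A + B)) ∧
    hstar Rstar = A * B / (2 * π * (A + B)) := by
  intro A B hstar
  have hw : ContinuousOn (fun s => g2 s / s) (Icc Rlt 1) :=
    hg2c.div continuousOn_id fun s hs => (h0.trans_le hs.1).ne'
  have hw_pos : ∀ s ∈ Icc Rlt 1, 0 < g2 s / s := fun s hs =>
    div_pos (hg2pos s hs) (h0.trans_le hs.1)
  have hA : 0 < A := intervalIntegral_pos_of_continuousOn hw hw_pos le_rfl h1 h2.le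
  have hB : 0 < B := intervalIntegral_pos_of_continuousOn hw hw_pos h1.le h2 le_rfl
  set C := A * B / (2 * π * (A + B)) with hC
  have hvalue : hstar Rstar = C := by
    simp only [hstar, le_refl, ite_true]
    exact (congrArg _ (inv_mul_cancel₀ hA.ne')).trans (mul_one _)
  refine ⟨?_, hvalue⟩
  have hderiv : ∀ r ∈ Ioo Rlt 1, r ≠ Rstar → HasDerivAt hstar
      (if r ≤ Rstar then C * A⁻¹ * (g2 r / r) else -(C * B⁻¹ * (g2 r / r))) r := fun r hr hrc => by
    simpa only [mul_assoc] using
      hasDerivAt_piecewise_integral (α := C * A⁻¹) (β := C * B⁻¹) hw hr hrc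
  calc _ = 2 * π * ∫ r in Rlt..1, r * ((g2 r)⁻¹ *
        (if r ≤ Rstar then C * A⁻¹ * (g2 r / r) else -(C * B⁻¹ * (g2 r / r))) ^ 2) :=
        setIntegral_annulus_eq_of_eq_fun_norm h0.le (h1.trans h2).le fun x hx1 hx2 hxc => by
          rw [norm_gradient_comp_norm (norm_pos_iff.mp (h0.trans hx1)) (hderiv _ ⟨hx1, hx2⟩ hxc),
            sq_abs]
    _ = 2 * π * ((C * A⁻¹) ^ 2 * A + (C * B⁻¹) ^ 2 * B) := by
      rw [integral_mul_inv_mul_sq_piecewise h1.le h2.le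
        ((hw.mono (Icc_subset_Icc_right h2.le)).intervalIntegrable_of_Icc h1.le)
        ((hw.mono (Icc_subset_Icc_left h1.le)).intervalIntegrable_of_Icc h2.le)]
    _ = C := by
      rw [hC]
      field_simp
      ring
end
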